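/- Setting C := ∑_{z ∈ T(z⋄)} cn_{z⋄}(z)·r(z), the optimal one-shot scheduling cost satisfies (7/15)·C ≤ OPT1(𝒥) ≤ (8/7)·C, where OPT1(𝒥) denotes the minimum cost of a feasible machine configuration for 𝒥. -/

import Mathlib

/-!
Write `ρ = r / g`. The nodes of `T z⋄` root disjoint subtrees containing every job type. Pricing
each job at the cheapest rate of a used type at or above its own is, by Abel summation against
the feasibility constraints, a lower bound on the cost of any feasible configuration, and it
charges the jobs of `H_z` at least `ρ z` as long as no used type reaches the parent of `z`. Since
`cn_{z⋄}` serves the jobs of `H_z` at rate `ρ z` except for the rounding at `z⋄`, this dual pays for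
all of `C` but `r z⋄`, and decency (or, if every used type lies below `z⋄`, the failure of decency
one step down the chain) pays for the rest. For the upper bound, rounding `cn_{z⋄}` up costs one
extra machine per type of `T z⋄` below `z⋄`; their rates are distinct powers of 8 below
`r z⋄ ≤ C`, so they add at most `C / 7`.
-/

open scoped Classical
open Finset MeasureTheory

namespace BSHM

noncomputable section

/-- The set of candidate parents of machine type `i`: types `j ∈ M` with `j > i`
and a strictly smaller normalized cost rate per capacity unit. -/
def pset (m : ℕ) (g r : ℕ → ℝ) (i : ℕ) : Set ℕ :=
  {j | j ≤ m ∧ i < j ∧ r j / g j < r i / g i}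

/-- The parent `p i` of machine type `i` (equal to `0` when the parent is undefined,
since any actual parent has index `≥ 2`). -/
def p (m : ℕ) (g r : ℕ → ℝ) (i : ℕ) : ℕ := sInf (pset m g r i)

/-- `pdef i` asserts that the parent of `i` is defined. -/
def pdef (m : ℕ) (g r : ℕ → ℝ) (i : ℕ) : Prop := (pset m g r i).Nonempty

/-- One step of the parent relation: `b` is the (defined) parent of `a`. -/
def pstep (m : ℕ) (g r : ℕ → ℝ) (a b : ℕ) : Prop :=
  pdef m g r a ∧ b = p m g r a

/-- `P i`: the set consisting of `i` together with all of its iterated parents. -/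
def P (m : ℕ) (g r : ℕ → ℝ) (i : ℕ) : Set ℕ :=
  {z | Relation.ReflTransGen (pstep m g r) i z}

/-- `A i`: the set of nodes in the tree rooted at `i`,
i.e. all `z ∈ M` having `i` as an ancestor (or equal to `i`). -/
def A (m : ℕ) (g r : ℕ → ℝ) (i : ℕ) : Set ℕ :=
  {z | 1 ≤ z ∧ z ≤ m ∧ i ∈ P m g r z}

/-- `v i`: the lowest-indexed node in the tree rooted at `i`. -/
def v (m : ℕ) (g r : ℕ → ℝ) (i : ℕ) : ℕ := sInf (A m g r i)

/-- `y i`: the younger siblings of `i` (same parent status, smaller index). -/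
def y (m : ℕ) (g r : ℕ → ℝ) (i : ℕ) : Set ℕ :=
  {z | 1 ≤ z ∧ z ≤ m ∧ z < i ∧ p m g r z = p m g r i}

/-- `esib i`: the elder siblings of `i`. -/
def esib (m : ℕ) (g r : ℕ → ℝ) (i : ℕ) : Set ℕ :=
  {z | 1 ≤ z ∧ z ≤ m ∧ i < z ∧ p m g r z = p m g r i}

/-- `T k := {k} ∪ ⋃_{z ∈ P(k)} y(z)`. -/
def T (m : ℕ) (g r : ℕ → ℝ) (k : ℕ) : Set ℕ :=
  {k} ∪ ⋃ z ∈ P m g r k, y m g r z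

/-- `T k` as a `Finset` (all relevant nodes lie in `{k} ∪ [1, m]`). -/
def TIcc (m : ℕ) (g r : ℕ → ℝ) (k : ℕ) : Finset ℕ :=
  (insert k (Finset.Icc 1 m)).filter (fun z => z ∈ T m g r k)

/-! ### Jobs and one-shot scheduling -/

variable {ι : Type*}

/-- The exact machine type of a job `J`: the least `z ∈ M` with `s J ≤ g z`. -/
def mty (m : ℕ) (g : ℕ → ℝ) (s : ι → ℝ) (J : ι) : ℕ :=
  sInf {z | 1 ≤ z ∧ z ≤ m ∧ s J ≤ g z}

/-- Total size of a finite set of jobs. -/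
def Ssum (s : ι → ℝ) (W : Finset ι) : ℝ := ∑ J ∈ W, s J

/-- `k0f X`: the highest-indexed exact machine type among the jobs of `X`. -/
def k0f (m : ℕ) (g : ℕ → ℝ) (s : ι → ℝ) (X : Finset ι) : ℕ :=
  X.sup (fun J => mty m g s J)

/-- `H z X`: the jobs of `X` whose exact machine type lies in the tree rooted at `z`. -/
def H (m : ℕ) (g r : ℕ → ℝ) (s : ι → ℝ) (z : ℕ) (X : Finset ι) : Finset ι :=
  X.filter (fun J => mty m g s J ∈ A m g r z)

/-- `SH X z := S(H_z(X))`. -/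
def SH (m : ℕ) (g r : ℕ → ℝ) (s : ι → ℝ) (X : Finset ι) (z : ℕ) : ℝ :=
  Ssum s (H m g r s z X)

/-- Feasibility of a machine configuration `w : M → ℕ` for the job set `X`. -/
def Feasible (m : ℕ) (g : ℕ → ℝ) (s : ι → ℝ) (X : Finset ι) (w : ℕ → ℕ) : Prop :=
  ∀ i, 1 ≤ i → i ≤ m →
    Ssum s (X.filter (fun J => i ≤ mty m g s J)) ≤ ∑ z ∈ Finset.Icc i m, (w z : ℝ) * g z

/-- The cost of a machine configuration. -/
def cost (m : ℕ) (r : ℕ → ℝ) (w : ℕ → ℕ) : ℝ :=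
  ∑ z ∈ Finset.Icc 1 m, (w z : ℝ) * r z

/-- The optimal one-shot scheduling cost for a job set `X`. -/
def OPT1 (m : ℕ) (g r : ℕ → ℝ) (s : ι → ℝ) (X : Finset ι) : ℝ :=
  sInf {c : ℝ | ∃ w : ℕ → ℕ, Feasible m g s X w ∧ c = cost m r w}

/-- The fractional machine configuration `cn_{z*}` for the job set `X`, with
highest-indexed machine type `zs`.  A node `i ∈ T(zs) \ {zs}` is the boundary
type `i*` exactly when `∑_{z ∈ T(zs), z > i} S(H_z) ≤ cn(zs)·g(zs) <
∑_{z ∈ T(zs), z ≥ i} S(H_z)`; nodes above the boundary get `0`,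
nodes below it get `S(H_i)/g_i`. -/
def cn (m : ℕ) (g r : ℕ → ℝ) (s : ι → ℝ) (X : Finset ι) (zs i : ℕ) : ℝ :=
  let B : ℝ := (⌈SH m g r s X zs / g zs⌉₊ : ℝ) * g zs
  let Sge : ℝ := ∑ z ∈ (TIcc m g r zs).filter (fun z => i ≤ z), SH m g r s X z
  let Sgt : ℝ := ∑ z ∈ (TIcc m g r zs).filter (fun z => i < z), SH m g r s X z
  if i = zs then (⌈SH m g r s X zs / g zs⌉₊ : ℝ)
  else if i ∈ T m g r zs then
    (if Sgt ≤ B ∧ B < Sge then (Sge - B) / g i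
     else if B < Sgt then SH m g r s X i / g i
     else 0)
  else 0

/-- `cn_{zs}` is decent: for every strict ancestor `zt` of `zs`, the total cost of
the machines of types in `T(zs) ∩ A(zt)` is at most the cost of one type-`zt` machine. -/
def decent (m : ℕ) (g r : ℕ → ℝ) (s : ι → ℝ) (X : Finset ι) (zs : ℕ) : Prop :=
  ∀ zt ∈ P m g r zs, zt ≠ zs →
    (∑ z ∈ (TIcc m g r zs).filter (fun z => z ∈ A m g r zt), cn m g r s X zs z * r z) ≤ r zt

/-- `z⋄(X)`: the least `z* ∈ P(k0(X))` such that `cn_{z*}` is decent. -/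
def zdia (m : ℕ) (g r : ℕ → ℝ) (s : ι → ℝ) (X : Finset ι) : ℕ :=
  sInf {zs | zs ∈ P m g r (k0f m g s X) ∧ decent m g r s X zs}

/-- The child of `zd` whose subtree contains node `k`. -/
def chil (m : ℕ) (g r : ℕ → ℝ) (zd k : ℕ) : ℕ :=
  sInf {i | p m g r i = zd ∧ k ∈ A m g r i}

/-- The node `i ∈ T(zd)` whose subtree contains node `k`. -/
def idxT (m : ℕ) (g r : ℕ → ℝ) (zd k : ℕ) : ℕ :=
  sInf {i | i ∈ T m g r zd ∧ k ∈ A m g r i}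

/-- The children `f(zd)` of node `zd`, as a `Finset`. -/
def fchFin (m : ℕ) (g r : ℕ → ℝ) (zd : ℕ) : Finset ℕ :=
  (Finset.Icc 1 m).filter (fun z => p m g r z = zd)

/-- The cost `r̃(X)(J)` charged to the job `J` of the job set `X`. -/
def charge (m : ℕ) (g r : ℕ → ℝ) (s : ι → ℝ) (X : Finset ι) (J : ι) : ℝ :=
  let zd := zdia m g r s X
  let ρ : ℕ → ℝ := fun i => r i / g i
  let Hh := X.filter (fun J' => mty m g s J' = zd)
  let c : ℝ := Ssum s Hh * ρ zd + ∑ i ∈ fchFin m g r zd, SH m g r s X i * ρ i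
  if mty m g s J ∈ A m g r zd then
    if g zd ≤ SH m g r s X zd then s J * ρ zd
    else if r zd < c then
      if mty m g s J = zd then s J * ρ zd
      else
        s J * (ρ (chil m g r zd (mty m g s J)) -
          (ρ (chil m g r zd (mty m g s J)) - ρ zd) *
            ((c - r zd) /
              (∑ i ∈ fchFin m g r zd, ∑ J' ∈ H m g r s i X, s J' * (ρ i - ρ zd))))
    else
      if mty m g s J = zd then s J * ρ zd * (1 + (r zd - c) / (Ssum s Hh * ρ zd))
      else s J * ρ (chil m g r zd (mty m g s J))
  else s J * ρ (idxT m g r zd (mty m g s J))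

end

end BSHM

namespace BSHM

section Tree

variable {m : ℕ} {g r : ℕ → ℝ}

lemma p_mem_pset {i : ℕ} (h : pdef m g r i) : p m g r i ∈ pset m g r i :=
  Nat.sInf_mem h

lemma lt_p {i : ℕ} (h : pdef m g r i) : i < p m g r i := (p_mem_pset h).2.1

lemma p_le_m {i : ℕ} (h : pdef m g r i) : p m g r i ≤ m := (p_mem_pset h).1

lemma rate_p_lt {i : ℕ} (h : pdef m g r i) :
    r (p m g r i) / g (p m g r i) < r i / g i :=
  (p_mem_pset h).2.2

lemma p_eq_zero {i : ℕ} (h : ¬ pdef m g r i) : p m g r i = 0 := by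
  rw [p, Set.not_nonempty_iff_eq_empty.mp h, Nat.sInf_empty]

lemma pdef_of_p_eq {i j : ℕ} (hij : p m g r i = p m g r j) (hi : pdef m g r i) :
    pdef m g r j := by
  by_contra hj
  have := lt_p hi
  rw [hij, p_eq_zero hj] at this
  omega

lemma rate_le_of_lt_p {i τ : ℕ} (hiτ : i ≤ τ) (hτm : τ ≤ m)
    (hτ : pdef m g r i → τ < p m g r i) : r i / g i ≤ r τ / g τ := by
  rcases hiτ.eq_or_lt with rfl | hlt
  · rfl
  by_contra! hρ
  have hmem : τ ∈ pset m g r i := ⟨hτm, hlt, hρ⟩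
  exact absurd (Nat.sInf_le hmem) (not_le.mpr (hτ ⟨τ, hmem⟩))

/-- Parent intervals `[i, p i]` are laminar. -/
lemma pdef_and_p_le_of_lt_p {i j : ℕ} (hij : i < j) (hi : pdef m g r i)
    (hj : j < p m g r i) : pdef m g r j ∧ p m g r j ≤ p m g r i := by
  have hmem : p m g r i ∈ pset m g r j :=
    ⟨p_le_m hi, hj, (rate_p_lt hi).trans_le
      (rate_le_of_lt_p hij.le ((hj.trans_le (p_le_m hi)).le) fun _ => hj)⟩
  exact ⟨⟨_, hmem⟩, Nat.sInf_le hmem⟩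

lemma p_mem_P {k : ℕ} (h : pdef m g r k) : p m g r k ∈ P m g r k :=
  Relation.ReflTransGen.single ⟨h, rfl⟩

lemma le_of_mem_P {k z : ℕ} (h : z ∈ P m g r k) : k ≤ z := by
  induction h with
  | refl => rfl
  | tail _ hstep ih => exact ih.trans (hstep.2 ▸ lt_p hstep.1).le

lemma le_m_of_mem_P {k z : ℕ} (hk : k ≤ m) (h : z ∈ P m g r k) : z ≤ m := by
  induction h with
  | refl => exact hk
  | tail _ hstep _ => exact hstep.2 ▸ p_le_m hstep.1

lemma rate_le_of_mem_P {k z : ℕ} (h : z ∈ P m g r k) : r z / g z ≤ r k / g k := by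
  induction h with
  | refl => rfl
  | tail _ hstep ih => exact (hstep.2 ▸ rate_p_lt hstep.1).le.trans ih

lemma mem_P_trans {k x z : ℕ} (hx : x ∈ P m g r k) (hz : z ∈ P m g r x) :
    z ∈ P m g r k :=
  Relation.ReflTransGen.trans hx hz

lemma mem_P_p_of_mem_P_of_ne {k z : ℕ} (h : z ∈ P m g r k) (hne : z ≠ k) :
    pdef m g r k ∧ z ∈ P m g r (p m g r k) := by
  rcases Relation.ReflTransGen.cases_head h with rfl | ⟨c, hc, hcz⟩
  · exact absurd rfl hne
  · exact ⟨hc.1, hc.2 ▸ hcz⟩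

lemma eq_of_mem_P_of_not_pdef {k z : ℕ} (hk : ¬ pdef m g r k) (h : z ∈ P m g r k) :
    z = k := by
  by_contra hne
  exact hk (mem_P_p_of_mem_P_of_ne h hne).1

lemma mem_P_total {k c c' : ℕ} (h : c ∈ P m g r k) (h' : c' ∈ P m g r k) :
    c' ∈ P m g r c ∨ c ∈ P m g r c' :=
  Relation.ReflTransGen.total_of_right_unique (fun _ _ _ hb hc => hb.2.trans hc.2.symm) h h'

lemma mem_P_of_le {k c c' : ℕ} (h : c ∈ P m g r k) (h' : c' ∈ P m g r k)
    (hle : c ≤ c') : c' ∈ P m g r c := by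
  rcases mem_P_total h h' with h0 | h0
  · exact h0
  · obtain rfl := le_antisymm hle (le_of_mem_P h0)
    exact Relation.ReflTransGen.refl

lemma exists_mem_P_le_lt_p {k b : ℕ} (hkb : k ≤ b) :
    ∃ c ∈ P m g r k, c ≤ b ∧ (pdef m g r c → b < p m g r c) := by
  induction h : b - k using Nat.strong_induction_on generalizing k with
  | _ n ih =>
    by_cases hup : pdef m g r k ∧ p m g r k ≤ b
    · have := lt_p hup.1
      obtain ⟨c, hc, hcb⟩ := ih (b - p m g r k) (by omega) hup.2 rfl
      exact ⟨c, mem_P_trans (p_mem_P hup.1) hc, hcb⟩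
    · exact ⟨k, Relation.ReflTransGen.refl, hkb, fun hd => not_le.mp fun h => hup ⟨hd, h⟩⟩

lemma rate_le_of_mem_P_of_lt_p {x z τ : ℕ} (hz : z ∈ P m g r x) (hxτ : x ≤ τ)
    (hτm : τ ≤ m) (hτ : pdef m g r z → τ < p m g r z) : r z / g z ≤ r τ / g τ := by
  obtain ⟨c, hc, hcτ, hcp⟩ := exists_mem_P_le_lt_p (m := m) (g := g) (r := r) hxτ
  have hρc := rate_le_of_lt_p hcτ hτm hcp
  rcases le_total z c with hzc | hcz
  · by_contra hne
    have hcz : c ≠ z := by rintro rfl; exact hne hρc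
    obtain ⟨hd, hpc⟩ := mem_P_p_of_mem_P_of_ne (mem_P_of_le hz hc hzc) hcz
    have := le_of_mem_P hpc
    have := hτ hd
    omega
  · exact (rate_le_of_mem_P (mem_P_of_le hc hz hcz)).trans hρc

end Tree

section TSet

variable {m : ℕ} {g r : ℕ → ℝ}

lemma mem_T_iff {k z : ℕ} :
    z ∈ T m g r k ↔ z = k ∨ ∃ x ∈ P m g r k, z ∈ y m g r x := by
  simp [T]

lemma notMem_P_of_mem_y {k x z : ℕ} (hx : x ∈ P m g r k) (hzy : z ∈ y m g r x) :
    z ∉ P m g r k := by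
  intro hz
  obtain ⟨-, -, hzx, hpz⟩ := hzy
  obtain ⟨hdz, hx'⟩ := mem_P_p_of_mem_P_of_ne (mem_P_of_le hz hx hzx.le) hzx.ne'
  rw [hpz] at hx'
  have := le_of_mem_P hx'
  have := lt_p (pdef_of_p_eq hpz hdz)
  omega

lemma lt_of_mem_T_of_ne {k z : ℕ} (hz : z ∈ T m g r k) (hne : z ≠ k) : z < k := by
  obtain hzk | ⟨x, hx, hzy⟩ := mem_T_iff.mp hz
  · exact absurd hzk hne
  obtain ⟨-, hzm, hzx, hpz⟩ := hzy
  by_contra! hkz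
  obtain ⟨c, hc, hcz, hcp⟩ := exists_mem_P_le_lt_p (m := m) (g := g) (r := r) hkz
  obtain ⟨hdc, hxc⟩ := mem_P_p_of_mem_P_of_ne (mem_P_of_le hc hx (by omega)) (by omega)
  have hpzc : pdef m g r z ∧ p m g r z ≤ p m g r c := by
    rcases hcz.eq_or_lt with rfl | hlt
    · exact ⟨hdc, le_rfl⟩
    · exact pdef_and_p_le_of_lt_p hlt hdc (hcp hdc)
  have := le_of_mem_P hxc
  have := lt_p (pdef_of_p_eq hpz hpzc.1)
  omega

lemma one_le_and_le_m_of_mem_T {k z : ℕ} (hk1 : 1 ≤ k) (hkm : k ≤ m)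
    (hz : z ∈ T m g r k) : 1 ≤ z ∧ z ≤ m := by
  obtain rfl | ⟨x, -, hzy⟩ := mem_T_iff.mp hz
  · exact ⟨hk1, hkm⟩
  · exact ⟨hzy.1, hzy.2.1⟩

lemma mem_TIcc_iff {k z : ℕ} (hk1 : 1 ≤ k) (hkm : k ≤ m) :
    z ∈ TIcc m g r k ↔ z ∈ T m g r k := by
  rw [TIcc, Finset.mem_filter, Finset.mem_insert, Finset.mem_Icc]
  exact ⟨And.right, fun h => ⟨Or.inr (one_le_and_le_m_of_mem_T hk1 hkm h), h⟩⟩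

lemma mem_TIcc_self {k : ℕ} (hk1 : 1 ≤ k) (hkm : k ≤ m) : k ∈ TIcc m g r k :=
  (mem_TIcc_iff hk1 hkm).mpr (mem_T_iff.mpr (Or.inl rfl))

lemma pdef_and_p_le_p_of_mem_T {k z : ℕ} (hz : z ∈ T m g r k) (hd : pdef m g r z) :
    pdef m g r k ∧ p m g r k ≤ p m g r z := by
  obtain rfl | ⟨x, hx, -, -, hzx, hpz⟩ := mem_T_iff.mp hz
  · exact ⟨hd, le_rfl⟩
  have hdx := pdef_of_p_eq hpz hd
  rcases eq_or_ne x k with rfl | hxk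
  · exact ⟨hdx, hpz.ge⟩
  obtain ⟨hdk, hx'⟩ := mem_P_p_of_mem_P_of_ne hx hxk
  have := le_of_mem_P hx'
  have := lt_p hdx
  exact ⟨hdk, by omega⟩

lemma lt_p_of_mem_T_of_notMem_P {k z c b : ℕ} (hz : z ∈ T m g r k) (hc : c ∈ P m g r k)
    (hcz : c ∉ P m g r z) (hcb : pdef m g r c → b < p m g r c) (hd : pdef m g r z) :
    b < p m g r z := by
  obtain rfl | ⟨x, hx, -, -, -, hpz⟩ := mem_T_iff.mp hz
  · exact absurd hc hcz
  have hdx := pdef_of_p_eq hpz hd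
  have hpxP := mem_P_trans hx (p_mem_P hdx)
  by_contra! hle
  rcases le_or_gt (p m g r x) c with hxc | hcx
  · exact hcz (Relation.ReflTransGen.head ⟨hd, rfl⟩ (hpz ▸ mem_P_of_le hpxP hc hxc))
  · obtain ⟨hdc, hpc⟩ := mem_P_p_of_mem_P_of_ne (mem_P_of_le hc hpxP hcx.le) hcx.ne'
    have := le_of_mem_P hpc
    have := hcb hdc
    omega

lemma eq_of_mem_T_of_mem_P {k z z' : ℕ} (hz : z ∈ T m g r k) (hz' : z' ∈ T m g r k)
    (h : z' ∈ P m g r z) : z' = z := by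
  by_contra hne
  obtain ⟨hdz, hz'p⟩ := mem_P_p_of_mem_P_of_ne h hne
  have hkz' : z' ∈ P m g r k ∧ k < z' := by
    obtain rfl | ⟨x, hx, -, -, hzx, hpz⟩ := mem_T_iff.mp hz
    · exact ⟨h, lt_of_le_of_ne (le_of_mem_P h) (Ne.symm hne)⟩
    · have hdx := pdef_of_p_eq hpz hdz
      rw [hpz] at hz'p
      have := le_of_mem_P hx
      have := le_of_mem_P hz'p
      have := lt_p hdx
      exact ⟨mem_P_trans (mem_P_trans hx (p_mem_P hdx)) hz'p, by omega⟩
  obtain h0 | ⟨x', hx', hz'y⟩ := mem_T_iff.mp hz'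
  · omega
  · exact notMem_P_of_mem_y hx' hz'y hkz'.1

lemma disjoint_H {ι : Type*} {s : ι → ℝ} {X : Finset ι} {k z z' : ℕ}
    (hz : z ∈ T m g r k) (hz' : z' ∈ T m g r k) (hne : z ≠ z') :
    Disjoint (H m g r s z X) (H m g r s z' X) := by
  refine Finset.disjoint_filter.mpr fun J _ hJ hJ' => hne ?_
  rcases mem_P_total hJ.2.2 hJ'.2.2 with h0 | h0
  · exact (eq_of_mem_T_of_mem_P hz hz' h0).symm
  · exact eq_of_mem_T_of_mem_P hz' hz h0

lemma exists_mem_T_mem_A {zs t : ℕ} (hzsm : zs ≤ m) (ht1 : 1 ≤ t) (htzs : t ≤ zs) :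
    ∃ z ∈ T m g r zs, t ∈ A m g r z := by
  obtain ⟨c, hc, hczs, hcp⟩ := exists_mem_P_le_lt_p (m := m) (g := g) (r := r) htzs
  have hA : t ∈ A m g r c := ⟨ht1, htzs.trans hzsm, hc⟩
  rcases hczs.eq_or_lt with rfl | hlt
  · exact ⟨c, mem_T_iff.mpr (Or.inl rfl), hA⟩
  refine ⟨c, mem_T_iff.mpr (Or.inr ?_), hA⟩
  have htc := le_of_mem_P hc
  by_cases hdc : pdef m g r c
  · have := hcp hdc
    obtain ⟨x, hx, hxb, hxp⟩ :=
      exists_mem_P_le_lt_p (m := m) (g := g) (r := r) (show zs ≤ p m g r c - 1 by omega)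
    have hzsx := le_of_mem_P hx
    obtain ⟨hdx, hpx⟩ := pdef_and_p_le_of_lt_p (by omega) hdc (show x < p m g r c by omega)
    have := hxp hdx
    exact ⟨x, hx, by omega, by omega, by omega, by omega⟩
  · obtain ⟨x, hx, -, hxp⟩ := exists_mem_P_le_lt_p (m := m) (g := g) (r := r) hzsm
    have hdx : ¬ pdef m g r x := fun hdx => absurd (p_le_m hdx) (not_le.mpr (hxp hdx))
    have hzsx := le_of_mem_P hx
    exact ⟨x, hx, by omega, by omega, by omega, by rw [p_eq_zero hdc, p_eq_zero hdx]⟩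

end TSet

section Sums

lemma pos_of_pos_of_lt {m : ℕ} {f : ℕ → ℝ} (h1 : 0 < f 1)
    (hf : ∀ i j, 1 ≤ i → i < j → j ≤ m → f i < f j) (z : ℕ) (hz1 : 1 ≤ z) (hzm : z ≤ m) :
    0 < f z := by
  rcases hz1.eq_or_lt with rfl | hlt
  · exact h1
  · exact h1.trans (hf 1 z le_rfl hlt hzm)

lemma mul_le_of_zpow_lt_zpow {b x y : ℝ} (hb : 1 < b) (hx : ∃ n : ℤ, x = b ^ n)
    (hy : ∃ n : ℤ, y = b ^ n) (hxy : x < y) : b * x ≤ y := by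
  obtain ⟨k, rfl⟩ := hx
  obtain ⟨n, rfl⟩ := hy
  have hkn : k + 1 ≤ n := (zpow_lt_zpow_iff_right₀ hb).mp hxy
  calc b * b ^ k = b ^ (k + 1) := by rw [zpow_add_one₀ (by positivity), mul_comm]
    _ ≤ b ^ n := zpow_le_zpow_right₀ hb.le hkn

lemma sum_le_div_seven_of_eight_mul_le {m : ℕ} {r : ℕ → ℝ}
    (hr0 : ∀ z, 1 ≤ z → z ≤ m → 0 ≤ r z)
    (h8 : ∀ i j, 1 ≤ i → i < j → j ≤ m → 8 * r i ≤ r j)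
    (F : Finset ℕ) {t : ℕ} (ht1 : 1 ≤ t) (htm : t ≤ m) (hF : ∀ z ∈ F, 1 ≤ z ∧ z < t) :
    ∑ z ∈ F, r z ≤ r t / 7 := by
  induction F using Finset.induction_on_max generalizing t with
  | empty =>
    simpa using div_nonneg (hr0 t ht1 htm) (by norm_num : (0 : ℝ) ≤ 7)
  | insert a F hlt ih =>
    obtain ⟨ha1, hat⟩ := hF a (Finset.mem_insert_self a F)
    have hF' : ∑ z ∈ F, r z ≤ r a / 7 :=
      ih ha1 (by omega) fun z hz => ⟨(hF z (Finset.mem_insert_of_mem hz)).1, hlt z hz⟩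
    rw [Finset.sum_insert fun haF => lt_irrefl a (hlt a haF)]
    linarith [h8 a t ha1 hat htm]

/-- Abel summation writes `∑ u j * f j` as `f a` times the full sum plus the suffix sums weighted
by the nonnegative increments of `f`. -/
lemma sum_mul_le_sum_mul_of_monotone {u v f : ℕ → ℝ} {a b : ℕ} (hf : Monotone f)
    (ha : 0 ≤ f a) (htail : ∀ i, a ≤ i → ∑ j ∈ Finset.Icc i b, u j ≤ ∑ j ∈ Finset.Icc i b, v j) :
    ∑ j ∈ Finset.Icc a b, u j * f j ≤ ∑ j ∈ Finset.Icc a b, v j * f j := by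
  suffices key : ∀ i, a ≤ i → i ≤ b + 1 →
      ∑ j ∈ Finset.Icc i b, u j * f j +
          f i * (∑ j ∈ Finset.Icc i b, v j - ∑ j ∈ Finset.Icc i b, u j) ≤
        ∑ j ∈ Finset.Icc i b, v j * f j by
    rcases le_or_gt a (b + 1) with hab | hab
    · nlinarith [key a le_rfl hab, htail a le_rfl]
    · simp [Finset.Icc_eq_empty_of_lt (show b < a by omega)]
  intro i hai hib
  induction hib using Nat.decreasingInduction with
  | self => simp
  | of_succ k hk ih =>
    have hslack := sub_nonneg.mpr (htail (k + 1) (by omega))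
    have hmono := mul_le_mul_of_nonneg_right (hf (Nat.le_succ k)) hslack
    rw [← Finset.insert_Icc_add_one_left_eq_Icc (by omega : k ≤ b)]
    simp only [Finset.sum_insert (by simp : k ∉ Finset.Icc (k + 1) b)]
    linarith [ih (by omega)]

end Sums

section Jobs

variable {m : ℕ} {g r : ℕ → ℝ} {ι : Type*} {s : ι → ℝ} {X : Finset ι}

lemma mty_spec (hm : 1 ≤ m) {J : ι} (h : s J ≤ g m) :
    1 ≤ mty m g s J ∧ mty m g s J ≤ m ∧ s J ≤ g (mty m g s J) :=
  Nat.sInf_mem (⟨m, hm, le_rfl, h⟩ : {z | 1 ≤ z ∧ z ≤ m ∧ s J ≤ g z}.Nonempty)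

lemma mty_le_k0f {J : ι} (hJ : J ∈ X) : mty m g s J ≤ k0f m g s X :=
  Finset.le_sup (f := fun J => mty m g s J) hJ

lemma exists_mty_eq_k0f (hX : X.Nonempty) : ∃ J ∈ X, mty m g s J = k0f m g s X := by
  obtain ⟨J, hJ, h⟩ := Finset.exists_mem_eq_sup X hX (fun J => mty m g s J)
  exact ⟨J, hJ, h.symm⟩

lemma SH_nonneg (hs : ∀ J ∈ X, 0 ≤ s J) (z : ℕ) : 0 ≤ SH m g r s X z :=
  Finset.sum_nonneg fun J hJ => hs J (Finset.mem_of_mem_filter J hJ)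

lemma zdia_mem_P_and_decent (hkm : k0f m g s X ≤ m) :
    zdia m g r s X ∈ P m g r (k0f m g s X) ∧ decent m g r s X (zdia m g r s X) := by
  obtain ⟨c, hc, -, hcp⟩ := exists_mem_P_le_lt_p (m := m) (g := g) (r := r) hkm
  have hroot : ¬ pdef m g r c := fun hd => absurd (p_le_m hd) (not_le.mpr (hcp hd))
  exact Nat.sInf_mem (s := {zs | zs ∈ P m g r (k0f m g s X) ∧ decent m g r s X zs})
    ⟨c, hc, fun zt hzt hne => absurd (eq_of_mem_P_of_not_pdef hroot hzt) hne⟩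

lemma zdia_le {zq : ℕ} (h1 : zq ∈ P m g r (k0f m g s X)) (h2 : decent m g r s X zq) :
    zdia m g r s X ≤ zq :=
  Nat.sInf_le ⟨h1, h2⟩

noncomputable def tailSH (m : ℕ) (g r : ℕ → ℝ) (s : ι → ℝ) (X : Finset ι) (zs i : ℕ) : ℝ :=
  ∑ z ∈ (TIcc m g r zs).filter (fun z => i ≤ z), SH m g r s X z

/-- Jobs of type at least `i` lie in the subtrees of the nodes of `T zs` that are at least `i`. -/
lemma Ssum_filter_le_sum_SH (hm : 1 ≤ m) (hs : ∀ J ∈ X, 0 ≤ s J ∧ s J ≤ g m) {zs : ℕ}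
    (hzs1 : 1 ≤ zs) (hzsm : zs ≤ m) (hk0 : k0f m g s X ≤ zs) (i : ℕ) :
    Ssum s (X.filter (fun J => i ≤ mty m g s J)) ≤ tailSH m g r s X zs i := by
  set F := (TIcc m g r zs).filter (fun z => i ≤ z)
  have hFT : ∀ z ∈ F, z ∈ T m g r zs := fun z hz =>
    (mem_TIcc_iff hzs1 hzsm).mp (Finset.mem_filter.mp hz).1
  have hsub : X.filter (fun J => i ≤ mty m g s J) ⊆ F.biUnion (fun z => H m g r s z X) := by
    intro J hJ
    obtain ⟨hJX, hiJ⟩ := Finset.mem_filter.mp hJ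
    obtain ⟨hJ1, -, -⟩ := mty_spec hm (hs J hJX).2
    obtain ⟨z, hzT, hzA⟩ := exists_mem_T_mem_A hzsm hJ1 ((mty_le_k0f hJX).trans hk0)
    refine Finset.mem_biUnion.mpr
      ⟨z, Finset.mem_filter.mpr ⟨?_, ?_⟩, Finset.mem_filter.mpr ⟨hJX, hzA⟩⟩
    · exact (mem_TIcc_iff hzs1 hzsm).mpr hzT
    · exact hiJ.trans (le_of_mem_P hzA.2.2)
  calc Ssum s (X.filter (fun J => i ≤ mty m g s J))
      ≤ ∑ J ∈ F.biUnion (fun z => H m g r s z X), s J :=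
        Finset.sum_le_sum_of_subset_of_nonneg hsub fun J hJ _ => by
          obtain ⟨z, -, hJz⟩ := Finset.mem_biUnion.mp hJ
          exact (hs J (Finset.mem_filter.mp hJz).1).1
    _ = ∑ z ∈ F, SH m g r s X z :=
        Finset.sum_biUnion fun x hx y hy hxy => disjoint_H (hFT x hx) (hFT y hy) hxy

end Jobs

section Duality

variable {m : ℕ} {g r : ℕ → ℝ} {ι : Type*} {s : ι → ℝ} {X : Finset ι}

/-- Weak LP duality for one-shot scheduling. -/
lemma sum_mul_le_cost (hm : 1 ≤ m) (hgpos : ∀ z, 1 ≤ z → z ≤ m → 0 < g z)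
    (hsle : ∀ J ∈ X, s J ≤ g m) {w : ℕ → ℕ} (hw : Feasible m g s X w) {f : ℕ → ℝ}
    (hf : Monotone f) (hf1 : 0 ≤ f 1)
    (hfw : ∀ τ, 1 ≤ τ → τ ≤ m → w τ ≠ 0 → f τ ≤ r τ / g τ) :
    ∑ J ∈ X, s J * f (mty m g s J) ≤ cost m r w := by
  set u : ℕ → ℝ := fun i => ∑ J ∈ X, if mty m g s J = i then s J else 0
  have hsum : ∀ (i : ℕ) (c : ℕ → ℝ), ∑ j ∈ Finset.Icc i m, u j * c j =
      ∑ J ∈ X.filter (fun J => i ≤ mty m g s J), s J * c (mty m g s J) := by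
    intro i c
    simp only [u, Finset.sum_mul, ite_mul, zero_mul]
    rw [Finset.sum_comm, Finset.sum_filter]
    refine Finset.sum_congr rfl fun J hJ => ?_
    rw [Finset.sum_ite_eq]
    have := (mty_spec hm (hsle J hJ)).2.1
    simp only [Finset.mem_Icc, this, and_true]
  have htail : ∀ i, 1 ≤ i → ∑ j ∈ Finset.Icc i m, u j ≤
      ∑ j ∈ Finset.Icc i m, (w j : ℝ) * g j := by
    intro i hi
    rcases le_or_gt i m with him | him
    · have h := hsum i fun _ => 1
      simp only [mul_one] at h
      rw [h]
      exact hw i hi him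
    · simp [Finset.Icc_eq_empty_of_lt him]
  have hfilter : X.filter (fun J => 1 ≤ mty m g s J) = X :=
    Finset.filter_true_of_mem fun J hJ => (mty_spec hm (hsle J hJ)).1
  calc ∑ J ∈ X, s J * f (mty m g s J)
      = ∑ j ∈ Finset.Icc 1 m, u j * f j := by rw [hsum 1 f, hfilter]
    _ ≤ ∑ j ∈ Finset.Icc 1 m, (w j : ℝ) * g j * f j :=
        sum_mul_le_sum_mul_of_monotone hf hf1 htail
    _ ≤ cost m r w := by
        refine Finset.sum_le_sum fun τ hτ => ?_
        obtain ⟨hτ1, hτm⟩ := Finset.mem_Icc.mp hτ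
        have hg := hgpos τ hτ1 hτm
        rcases eq_or_ne (w τ) 0 with h0 | h0
        · simp [h0]
        · calc (w τ : ℝ) * g τ * f τ ≤ (w τ : ℝ) * g τ * (r τ / g τ) :=
                mul_le_mul_of_nonneg_left (hfw τ hτ1 hτm h0) (by positivity)
            _ = (w τ : ℝ) * r τ := by field_simp

noncomputable def minUsedRate (m : ℕ) (g r : ℕ → ℝ) (w : ℕ → ℕ) (t i : ℕ) : ℝ :=
  (insert t ((Finset.Icc i m).filter (fun τ => w τ ≠ 0))).inf' (Finset.insert_nonempty _ _)
    (fun τ => r τ / g τ)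

lemma le_minUsedRate {w : ℕ → ℕ} {t i : ℕ} {x : ℝ} (ht : x ≤ r t / g t)
    (h : ∀ τ, i ≤ τ → τ ≤ m → w τ ≠ 0 → x ≤ r τ / g τ) : x ≤ minUsedRate m g r w t i := by
  refine Finset.le_inf' _ _ fun τ hτ => ?_
  rcases Finset.mem_insert.mp hτ with rfl | hτ
  · exact ht
  · obtain ⟨hτI, hwτ⟩ := Finset.mem_filter.mp hτ
    exact h τ (Finset.mem_Icc.mp hτI).1 (Finset.mem_Icc.mp hτI).2 hwτ

lemma minUsedRate_le {w : ℕ → ℕ} {t i τ : ℕ} (hiτ : i ≤ τ) (hτm : τ ≤ m) (hwτ : w τ ≠ 0) :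
    minUsedRate m g r w t i ≤ r τ / g τ :=
  Finset.inf'_le _ (Finset.mem_insert_of_mem
    (Finset.mem_filter.mpr ⟨Finset.mem_Icc.mpr ⟨hiτ, hτm⟩, hwτ⟩))

lemma monotone_minUsedRate (w : ℕ → ℕ) (t : ℕ) : Monotone (minUsedRate m g r w t) :=
  fun _ _ hij => le_minUsedRate (Finset.inf'_le _ (Finset.mem_insert_self _ _))
    fun _ hjτ hτm hwτ => minUsedRate_le (hij.trans hjτ) hτm hwτ

/-- The dual solution `minUsedRate`: no used type reaches the parent of `z`, so the jobs of `H z`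
pay at least the rate of `z`. -/
lemma sum_SH_mul_rate_le_cost (hm : 1 ≤ m) (hgpos : ∀ z, 1 ≤ z → z ≤ m → 0 < g z)
    (hr0 : ∀ z, 1 ≤ z → z ≤ m → 0 ≤ r z) (hs : ∀ J ∈ X, 0 ≤ s J ∧ s J ≤ g m)
    {w : ℕ → ℕ} (hw : Feasible m g s X w) {t : ℕ} (ht1 : 1 ≤ t) (hk0t : k0f m g s X ≤ t)
    (htm : t ≤ m) (hwt : ∀ τ, 1 ≤ τ → τ ≤ m → w τ ≠ 0 → τ ≤ t) {k : ℕ} (N : Finset ℕ)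
    (hNT : ∀ z ∈ N, z ∈ T m g r k) (hNp : ∀ z ∈ N, pdef m g r z → t < p m g r z) :
    ∑ z ∈ N, SH m g r s X z * (r z / g z) ≤ cost m r w := by
  set Λ := minUsedRate m g r w t
  have hΛ1 : 0 ≤ Λ 1 := le_minUsedRate (div_nonneg (hr0 t ht1 htm) (hgpos t ht1 htm).le)
    fun τ h1 h2 _ => div_nonneg (hr0 τ h1 h2) (hgpos τ h1 h2).le
  have hΛz : ∀ z ∈ N, ∀ J ∈ H m g r s z X, r z / g z ≤ Λ (mty m g s J) := by
    intro z hz J hJ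
    obtain ⟨hJX, -, -, hzJ⟩ := Finset.mem_filter.mp hJ
    have hrate : ∀ τ, mty m g s J ≤ τ → τ ≤ t → r z / g z ≤ r τ / g τ := fun τ hJτ hτt =>
      rate_le_of_mem_P_of_lt_p hzJ hJτ (hτt.trans htm) fun hd => hτt.trans_lt (hNp z hz hd)
    exact le_minUsedRate (hrate t ((mty_le_k0f hJX).trans hk0t) le_rfl) fun τ hJτ hτm hwτ =>
      hrate τ hJτ (hwt τ ((mty_spec hm (hs J hJX).2).1.trans hJτ) hτm hwτ)
  calc ∑ z ∈ N, SH m g r s X z * (r z / g z)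
      = ∑ z ∈ N, ∑ J ∈ H m g r s z X, s J * (r z / g z) := by
        simp only [SH, Ssum, Finset.sum_mul]
    _ ≤ ∑ z ∈ N, ∑ J ∈ H m g r s z X, s J * Λ (mty m g s J) :=
        Finset.sum_le_sum fun z hz => Finset.sum_le_sum fun J hJ =>
          mul_le_mul_of_nonneg_left (hΛz z hz J hJ) (hs J (Finset.mem_filter.mp hJ).1).1
    _ = ∑ J ∈ N.biUnion (fun z => H m g r s z X), s J * Λ (mty m g s J) :=
        (Finset.sum_biUnion fun x hx y hy hxy => disjoint_H (hNT x hx) (hNT y hy) hxy).symm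
    _ ≤ ∑ J ∈ X, s J * Λ (mty m g s J) := by
        refine Finset.sum_le_sum_of_subset_of_nonneg ?_ fun J hJX _ => ?_
        · exact Finset.biUnion_subset.mpr fun z _ => Finset.filter_subset _ _
        · exact mul_nonneg (hs J hJX).1
            (hΛ1.trans (monotone_minUsedRate w t (mty_spec hm (hs J hJX).2).1))
    _ ≤ cost m r w := sum_mul_le_cost hm hgpos (fun J hJ => (hs J hJ).2) hw
        (monotone_minUsedRate w t) hΛ1 fun _ _ hτm hwτ => minUsedRate_le le_rfl hτm hwτ

end Duality

section Fractional

variable {m : ℕ} {g r : ℕ → ℝ} {ι : Type*} {s : ι → ℝ} {X : Finset ι}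

lemma sum_filter_le_eq_add (t : Finset ℕ) (f : ℕ → ℝ) (i : ℕ) :
    ∑ z ∈ t.filter (fun z => i ≤ z), f z =
      (if i ∈ t then f i else 0) + ∑ z ∈ t.filter (fun z => i + 1 ≤ z), f z := by
  rw [Finset.sum_filter, Finset.sum_filter, ← Finset.sum_ite_eq' t i f, ← Finset.sum_add_distrib]
  refine Finset.sum_congr rfl fun z _ => ?_
  rcases lt_trichotomy z i with h | rfl | h
  · simp [h.ne, h.not_ge, show ¬ i + 1 ≤ z by omega]
  · simp
  · simp [h.ne', h.le, show i + 1 ≤ z by omega]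

lemma le_of_mem_TIcc {k z : ℕ} (hz : z ∈ TIcc m g r k) : z ≤ k := by
  rcases eq_or_ne z k with rfl | hne
  · exact le_rfl
  · exact (lt_of_mem_T_of_ne (Finset.mem_filter.mp hz).2 hne).le

lemma tailSH_eq_add (zs i : ℕ) :
    tailSH m g r s X zs i =
      (if i ∈ TIcc m g r zs then SH m g r s X i else 0) + tailSH m g r s X zs (i + 1) :=
  sum_filter_le_eq_add _ _ i

lemma tailSH_eq_SH_add {zs i : ℕ} (hzs1 : 1 ≤ zs) (hzsm : zs ≤ m) (hiT : i ∈ T m g r zs) :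
    tailSH m g r s X zs i = SH m g r s X i + tailSH m g r s X zs (i + 1) := by
  rw [tailSH_eq_add, if_pos ((mem_TIcc_iff hzs1 hzsm).mpr hiT)]

lemma cn_self (zs : ℕ) : cn m g r s X zs zs = ⌈SH m g r s X zs / g zs⌉₊ := by
  simp [cn]

lemma cn_of_notMem_T {zs i : ℕ} (hi : i ∉ T m g r zs) (hne : i ≠ zs) :
    cn m g r s X zs i = 0 := by
  simp [cn, hi, hne]

lemma SH_le_cn_self_mul_g {zs : ℕ} (hgzs : 0 < g zs) :
    SH m g r s X zs ≤ cn m g r s X zs zs * g zs := by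
  rw [cn_self, ← div_le_iff₀ hgzs]
  exact Nat.le_ceil _

lemma cn_self_mul_r_le {zs : ℕ} (hgzs : 0 < g zs) (hrzs : 0 ≤ r zs)
    (hSH : 0 ≤ SH m g r s X zs) :
    cn m g r s X zs zs * r zs ≤ SH m g r s X zs * (r zs / g zs) + r zs := by
  rw [cn_self]
  calc (⌈SH m g r s X zs / g zs⌉₊ : ℝ) * r zs ≤ (SH m g r s X zs / g zs + 1) * r zs :=
        mul_le_mul_of_nonneg_right (Nat.ceil_lt_add_one (by positivity)).le hrzs
    _ = SH m g r s X zs * (r zs / g zs) + r zs := by ring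

section

variable (hgpos : ∀ z, 1 ≤ z → z ≤ m → 0 < g z) (hs0 : ∀ J ∈ X, 0 ≤ s J)
  {zs : ℕ} (hzs1 : 1 ≤ zs) (hzsm : zs ≤ m)
include hgpos hs0 hzs1 hzsm

/-- Below `zs` the configuration fills, from the top down, the capacity left over by the
`zs`-machines; hence it is a difference of two clipped tails. -/
lemma cn_mul_g_eq {i : ℕ} (hiT : i ∈ T m g r zs) (hne : i ≠ zs) :
    cn m g r s X zs i * g i =
      max (tailSH m g r s X zs i - cn m g r s X zs zs * g zs) 0 -
        max (tailSH m g r s X zs (i + 1) - cn m g r s X zs zs * g zs) 0 := by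
  obtain ⟨hi1, him⟩ := one_le_and_le_m_of_mem_T hzs1 hzsm hiT
  have hgi := hgpos i hi1 him
  have hSH := SH_nonneg (m := m) (g := g) (r := r) hs0 i
  have hsplit := tailSH_eq_SH_add (s := s) (X := X) hzs1 hzsm hiT
  rw [cn_self]
  simp only [tailSH] at hsplit ⊢
  have hlt : (TIcc m g r zs).filter (fun z => i < z) =
      (TIcc m g r zs).filter (fun z => i + 1 ≤ z) := rfl
  simp only [cn, if_neg hne, if_pos hiT, hlt]
  split_ifs with h1 h2
  · rw [div_mul_cancel₀ _ hgi.ne', max_eq_left (by linarith [h1.2]),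
      max_eq_right (by linarith [h1.1])]
    ring
  · rw [div_mul_cancel₀ _ hgi.ne', max_eq_left (by linarith), max_eq_left (by linarith)]
    linarith
  · push Not at h1 h2
    rw [zero_mul, max_eq_right (by linarith [h1 h2]), max_eq_right (by linarith)]
    ring

lemma cn_nonneg (i : ℕ) : 0 ≤ cn m g r s X zs i := by
  rcases eq_or_ne i zs with rfl | hne
  · rw [cn_self]
    exact Nat.cast_nonneg _
  by_cases hiT : i ∈ T m g r zs
  · obtain ⟨hi1, him⟩ := one_le_and_le_m_of_mem_T hzs1 hzsm hiT
    refine (mul_nonneg_iff_of_pos_right (hgpos i hi1 him)).mp ?_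
    rw [cn_mul_g_eq hgpos hs0 hzs1 hzsm hiT hne, sub_nonneg,
      tailSH_eq_SH_add hzs1 hzsm hiT]
    exact max_le_max (by linarith [SH_nonneg (m := m) (g := g) (r := r) hs0 i]) le_rfl
  · rw [cn_of_notMem_T hiT hne]

lemma cn_mul_g_le_SH {i : ℕ} (hiT : i ∈ T m g r zs) (hne : i ≠ zs) :
    cn m g r s X zs i * g i ≤ SH m g r s X i := by
  have hSH := SH_nonneg (m := m) (g := g) (r := r) hs0 i
  rw [cn_mul_g_eq hgpos hs0 hzs1 hzsm hiT hne, tailSH_eq_SH_add hzs1 hzsm hiT]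
  set B := cn m g r s X zs zs * g zs
  set t := tailSH m g r s X zs (i + 1)
  rw [sub_le_iff_le_add]
  exact max_le (by linarith [le_max_left (t - B) 0]) (by linarith [le_max_right (t - B) 0])

/-- Telescoping `cn_mul_g_eq`: below `zs` the capacity is `max B (tailSH i)`, where
`B = cn zs zs * g zs`. -/
lemma tailSH_le_sum_cn_mul_g (i : ℕ) :
    tailSH m g r s X zs i ≤
      ∑ z ∈ (TIcc m g r zs).filter (fun z => i ≤ z), cn m g r s X zs z * g z := by
  have hempty : ∀ j, zs < j → (TIcc m g r zs).filter (fun z => j ≤ z) = ∅ := fun j hj =>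
    Finset.filter_eq_empty_iff.mpr fun z hz => by have := le_of_mem_TIcc hz; omega
  rcases le_or_gt i (zs + 1) with hi | hi
  swap
  · simp [tailSH, hempty i (by omega)]
  induction hi using Nat.decreasingInduction with
  | self => rw [tailSH, hempty (zs + 1) (by omega), Finset.sum_empty, Finset.sum_empty]
  | of_succ k hk ih =>
    rw [tailSH_eq_add, sum_filter_le_eq_add _ (fun z => cn m g r s X zs z * g z) k]
    split_ifs with hkT
    swap
    · simpa using ih
    rcases eq_or_ne k zs with rfl | hne
    · linarith [SH_le_cn_self_mul_g (m := m) (r := r) (s := s) (X := X) (hgpos k hzs1 hzsm)]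
    have hkT' := (mem_TIcc_iff hzs1 hzsm).mp hkT
    have hcn := cn_mul_g_eq hgpos hs0 hzs1 hzsm hkT' hne
    have htail := tailSH_eq_SH_add (s := s) (X := X) hzs1 hzsm hkT'
    have hB : cn m g r s X zs zs * g zs ≤
        ∑ z ∈ (TIcc m g r zs).filter (fun z => k + 1 ≤ z), cn m g r s X zs z * g z := by
      refine Finset.single_le_sum (f := fun z => cn m g r s X zs z * g z) (fun z hz => ?_)
        (Finset.mem_filter.mpr ⟨mem_TIcc_self hzs1 hzsm,
          Nat.lt_of_le_of_ne (le_of_mem_TIcc hkT) hne⟩)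
      obtain ⟨h1, h2⟩ := one_le_and_le_m_of_mem_T hzs1 hzsm
        ((mem_TIcc_iff hzs1 hzsm).mp (Finset.mem_filter.mp hz).1)
      exact mul_nonneg (cn_nonneg hgpos hs0 hzs1 hzsm z) (hgpos z h1 h2).le
    set B := cn m g r s X zs zs * g zs
    set D := ∑ z ∈ (TIcc m g r zs).filter (fun z => k + 1 ≤ z), cn m g r s X zs z * g z
    have := max_le (a := tailSH m g r s X zs (k + 1) - B) (b := 0) (c := D - B)
      (by linarith) (by linarith)
    linarith [le_max_left (tailSH m g r s X zs k - B) 0]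

lemma sum_cn_mul_r_le (hr0 : ∀ z, 1 ≤ z → z ≤ m → 0 ≤ r z) {F : Finset ℕ}
    (hF : F ⊆ TIcc m g r zs) :
    ∑ z ∈ F, cn m g r s X zs z * r z ≤
      (if zs ∈ F then r zs else 0) + ∑ z ∈ F, SH m g r s X z * (r z / g z) := by
  rw [← Finset.sum_ite_eq, ← Finset.sum_add_distrib]
  refine Finset.sum_le_sum fun z hz => ?_
  have hzT := (mem_TIcc_iff hzs1 hzsm).mp (hF hz)
  obtain ⟨h1, h2⟩ := one_le_and_le_m_of_mem_T hzs1 hzsm hzT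
  rcases eq_or_ne zs z with rfl | hne
  · simpa [add_comm] using cn_self_mul_r_le (hgpos zs h1 h2) (hr0 zs h1 h2) (SH_nonneg hs0 zs)
  · rw [if_neg hne, zero_add]
    have hg := hgpos z h1 h2
    calc cn m g r s X zs z * r z = cn m g r s X zs z * g z * (r z / g z) := by field_simp
      _ ≤ SH m g r s X z * (r z / g z) :=
        mul_le_mul_of_nonneg_right (cn_mul_g_le_SH hgpos hs0 hzs1 hzsm hzT hne.symm)
          (div_nonneg (hr0 z h1 h2) hg.le)

end

end Fractional

section Bounds

variable {m : ℕ} {g r : ℕ → ℝ} {ι : Type*} {s : ι → ℝ} {X : Finset ι}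

noncomputable def cnCost (m : ℕ) (g r : ℕ → ℝ) (s : ι → ℝ) (X : Finset ι) (zs : ℕ) : ℝ :=
  ∑ z ∈ TIcc m g r zs, cn m g r s X zs z * r z

noncomputable def ceilConfig (m : ℕ) (g r : ℕ → ℝ) (s : ι → ℝ) (X : Finset ι) (zs : ℕ) :
    ℕ → ℕ :=
  fun τ => if τ ∈ TIcc m g r zs then ⌈cn m g r s X zs τ⌉₊ else 0

lemma sum_ceilConfig_mul {zs : ℕ} (hzs1 : 1 ≤ zs) (hzsm : zs ≤ m) (i : ℕ) (f : ℕ → ℝ) :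
    ∑ τ ∈ Finset.Icc i m, (ceilConfig m g r s X zs τ : ℝ) * f τ =
      ∑ τ ∈ (TIcc m g r zs).filter (fun z => i ≤ z), (⌈cn m g r s X zs τ⌉₊ : ℝ) * f τ := by
  have hfilter : (Finset.Icc i m).filter (fun τ => τ ∈ TIcc m g r zs) =
      (TIcc m g r zs).filter (fun z => i ≤ z) := by
    ext τ
    simp only [Finset.mem_filter, Finset.mem_Icc]
    constructor
    · rintro ⟨⟨hiτ, -⟩, hτ⟩
      exact ⟨hτ, hiτ⟩
    · rintro ⟨hτ, hiτ⟩
      exact ⟨⟨hiτ, (one_le_and_le_m_of_mem_T hzs1 hzsm ((mem_TIcc_iff hzs1 hzsm).mp hτ)).2⟩, hτ⟩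
  rw [← hfilter, Finset.sum_filter]
  refine Finset.sum_congr rfl fun τ _ => ?_
  by_cases hτ : τ ∈ TIcc m g r zs <;> simp [ceilConfig, hτ]

lemma feasible_ceilConfig (hm : 1 ≤ m) (hgpos : ∀ z, 1 ≤ z → z ≤ m → 0 < g z)
    (hs : ∀ J ∈ X, 0 ≤ s J ∧ s J ≤ g m) {zs : ℕ} (hzs1 : 1 ≤ zs) (hzsm : zs ≤ m)
    (hk0 : k0f m g s X ≤ zs) : Feasible m g s X (ceilConfig m g r s X zs) := by
  intro i _ _
  have hs0 : ∀ J ∈ X, 0 ≤ s J := fun J hJ => (hs J hJ).1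
  calc Ssum s (X.filter (fun J => i ≤ mty m g s J))
      ≤ tailSH m g r s X zs i := Ssum_filter_le_sum_SH hm hs hzs1 hzsm hk0 i
    _ ≤ ∑ z ∈ (TIcc m g r zs).filter (fun z => i ≤ z), cn m g r s X zs z * g z :=
        tailSH_le_sum_cn_mul_g hgpos hs0 hzs1 hzsm i
    _ ≤ ∑ z ∈ (TIcc m g r zs).filter (fun z => i ≤ z), (⌈cn m g r s X zs z⌉₊ : ℝ) * g z := by
        refine Finset.sum_le_sum fun z hz => mul_le_mul_of_nonneg_right (Nat.le_ceil _) ?_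
        obtain ⟨h1, h2⟩ := one_le_and_le_m_of_mem_T hzs1 hzsm
          ((mem_TIcc_iff hzs1 hzsm).mp (Finset.mem_filter.mp hz).1)
        exact (hgpos z h1 h2).le
    _ = ∑ τ ∈ Finset.Icc i m, (ceilConfig m g r s X zs τ : ℝ) * g τ :=
        (sum_ceilConfig_mul hzs1 hzsm i g).symm

/-- Rounding up adds at most one machine of each type of `T zs` below `zs`. -/
lemma cost_ceilConfig_le (hgpos : ∀ z, 1 ≤ z → z ≤ m → 0 < g z)
    (hr0 : ∀ z, 1 ≤ z → z ≤ m → 0 ≤ r z) (h8 : ∀ i j, 1 ≤ i → i < j → j ≤ m → 8 * r i ≤ r j)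
    (hs0 : ∀ J ∈ X, 0 ≤ s J) {zs : ℕ} (hzs1 : 1 ≤ zs) (hzsm : zs ≤ m) :
    cost m r (ceilConfig m g r s X zs) ≤ cnCost m g r s X zs + r zs / 7 := by
  have hzs := mem_TIcc_self (g := g) (r := r) hzs1 hzsm
  have hfull : (TIcc m g r zs).filter (fun z => 1 ≤ z) = TIcc m g r zs :=
    Finset.filter_true_of_mem fun z hz =>
      (one_le_and_le_m_of_mem_T hzs1 hzsm ((mem_TIcc_iff hzs1 hzsm).mp hz)).1
  have hrest : ∑ τ ∈ (TIcc m g r zs).erase zs, (⌈cn m g r s X zs τ⌉₊ : ℝ) * r τ ≤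
      ∑ τ ∈ (TIcc m g r zs).erase zs, cn m g r s X zs τ * r τ +
        ∑ τ ∈ (TIcc m g r zs).erase zs, r τ := by
    rw [← Finset.sum_add_distrib]
    refine Finset.sum_le_sum fun τ hτ => ?_
    obtain ⟨h1, h2⟩ := one_le_and_le_m_of_mem_T hzs1 hzsm
      ((mem_TIcc_iff hzs1 hzsm).mp (Finset.mem_of_mem_erase hτ))
    nlinarith [Nat.ceil_lt_add_one (cn_nonneg (r := r) hgpos hs0 hzs1 hzsm τ), hr0 τ h1 h2]
  have hgeom : ∑ τ ∈ (TIcc m g r zs).erase zs, r τ ≤ r zs / 7 := by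
    refine sum_le_div_seven_of_eight_mul_le hr0 h8 _ hzs1 hzsm fun z hz => ?_
    have hzT := (mem_TIcc_iff hzs1 hzsm).mp (Finset.mem_of_mem_erase hz)
    exact ⟨(one_le_and_le_m_of_mem_T hzs1 hzsm hzT).1,
      lt_of_mem_T_of_ne hzT (Finset.ne_of_mem_erase hz)⟩
  rw [cost, sum_ceilConfig_mul hzs1 hzsm, hfull, cnCost, ← Finset.add_sum_erase _ _ hzs,
    ← Finset.add_sum_erase _ _ hzs, cn_self, Nat.ceil_natCast]
  linarith

lemma r_le_cnCost (hgpos : ∀ z, 1 ≤ z → z ≤ m → 0 < g z)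
    (hr0 : ∀ z, 1 ≤ z → z ≤ m → 0 ≤ r z) (hs0 : ∀ J ∈ X, 0 ≤ s J) {zs : ℕ} (hzs1 : 1 ≤ zs)
    (hzsm : zs ≤ m) (hSH : 0 < SH m g r s X zs) : r zs ≤ cnCost m g r s X zs := by
  have hcn : (1 : ℝ) ≤ cn m g r s X zs zs := by
    rw [cn_self]
    exact_mod_cast Nat.one_le_iff_ne_zero.mpr
      (Nat.ceil_pos.mpr (div_pos hSH (hgpos zs hzs1 hzsm))).ne'
  calc r zs ≤ cn m g r s X zs zs * r zs := le_mul_of_one_le_left (hr0 zs hzs1 hzsm) hcn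
    _ ≤ cnCost m g r s X zs := by
      refine Finset.single_le_sum (f := fun z => cn m g r s X zs z * r z) (fun z hz => ?_)
        (mem_TIcc_self hzs1 hzsm)
      obtain ⟨h1, h2⟩ := one_le_and_le_m_of_mem_T hzs1 hzsm ((mem_TIcc_iff hzs1 hzsm).mp hz)
      exact mul_nonneg (cn_nonneg hgpos hs0 hzs1 hzsm z) (hr0 z h1 h2)

lemma r_le_cost (hr0 : ∀ z, 1 ≤ z → z ≤ m → 0 ≤ r z) {w : ℕ → ℕ} {t : ℕ} (ht1 : 1 ≤ t)
    (htm : t ≤ m) (hwt : w t ≠ 0) : r t ≤ cost m r w := by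
  calc r t ≤ (w t : ℝ) * r t :=
        le_mul_of_one_le_left (hr0 t ht1 htm) (by exact_mod_cast Nat.one_le_iff_ne_zero.mpr hwt)
    _ ≤ cost m r w := by
      refine Finset.single_le_sum (f := fun τ => (w τ : ℝ) * r τ) (fun τ hτ => ?_)
        (Finset.mem_Icc.mpr ⟨ht1, htm⟩)
      obtain ⟨h1, h2⟩ := Finset.mem_Icc.mp hτ
      exact mul_nonneg (Nat.cast_nonneg _) (hr0 τ h1 h2)

lemma exists_max_used (hm : 1 ≤ m) (hs : ∀ J ∈ X, 0 < s J ∧ s J ≤ g m) (hX : X.Nonempty)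
    {w : ℕ → ℕ} (hw : Feasible m g s X w) :
    ∃ t, k0f m g s X ≤ t ∧ t ≤ m ∧ w t ≠ 0 ∧ ∀ τ, 1 ≤ τ → τ ≤ m → w τ ≠ 0 → τ ≤ t := by
  obtain ⟨J, hJ, hJk⟩ := exists_mty_eq_k0f (m := m) (g := g) hX
  obtain ⟨hk1, hkm, -⟩ := hJk ▸ mty_spec hm (hs J hJ).2
  have hpos : 0 < ∑ τ ∈ Finset.Icc (k0f m g s X) m, (w τ : ℝ) * g τ := by
    refine lt_of_lt_of_le ?_ (hw _ hk1 hkm)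
    exact (hs J hJ).1.trans_le (Finset.single_le_sum (fun J' hJ' => (hs J' (Finset.mem_filter.mp
      hJ').1).1.le) (Finset.mem_filter.mpr ⟨hJ, hJk.ge⟩))
  obtain ⟨τ, hτ, hwτ⟩ := Finset.exists_ne_zero_of_sum_ne_zero hpos.ne'
  obtain ⟨hkτ, hτm⟩ := Finset.mem_Icc.mp hτ
  set U := (Finset.Icc 1 m).filter (fun τ => w τ ≠ 0)
  have hτU : τ ∈ U := Finset.mem_filter.mpr
    ⟨Finset.mem_Icc.mpr ⟨hk1.trans hkτ, hτm⟩, fun h => hwτ (by simp [h])⟩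
  obtain ⟨htI, hwt⟩ := Finset.mem_filter.mp (U.max'_mem ⟨τ, hτU⟩)
  exact ⟨U.max' ⟨τ, hτU⟩, hkτ.trans (U.le_max' τ hτU), (Finset.mem_Icc.mp htI).2, hwt,
    fun τ' h1 h2 hw' => U.le_max' τ' (Finset.mem_filter.mpr ⟨Finset.mem_Icc.mpr ⟨h1, h2⟩, hw'⟩)⟩

lemma zdia_spec (hm : 1 ≤ m) (hs : ∀ J ∈ X, 0 < s J ∧ s J ≤ g m) (hX : X.Nonempty) :
    1 ≤ k0f m g s X ∧ k0f m g s X ≤ zdia m g r s X ∧ zdia m g r s X ≤ m ∧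
      decent m g r s X (zdia m g r s X) ∧ 0 < SH m g r s X (zdia m g r s X) := by
  obtain ⟨J, hJX, hJk⟩ := exists_mty_eq_k0f (m := m) (g := g) hX
  obtain ⟨hk1, hkm, -⟩ := hJk ▸ mty_spec hm (hs J hJX).2
  obtain ⟨hzdP, hdec⟩ := zdia_mem_P_and_decent (r := r) hkm
  refine ⟨hk1, le_of_mem_P hzdP, le_m_of_mem_P hkm hzdP, hdec, ?_⟩
  exact (hs J hJX).1.trans_le <| Finset.single_le_sum
    (fun J' hJ' => (hs J' (Finset.mem_filter.mp hJ').1).1.le)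
    (Finset.mem_filter.mpr ⟨hJX, hJk ▸ ⟨hk1, hkm, hzdP⟩⟩)

lemma le_OPT1_and_OPT1_le (hr0 : ∀ z, 1 ≤ z → z ≤ m → 0 ≤ r z) {w₀ : ℕ → ℕ} {L U : ℝ}
    (hw₀ : Feasible m g s X w₀) (hU : cost m r w₀ ≤ U)
    (hL : ∀ w, Feasible m g s X w → L ≤ cost m r w) :
    L ≤ OPT1 m g r s X ∧ OPT1 m g r s X ≤ U := by
  have hmem : cost m r w₀ ∈ {c | ∃ w, Feasible m g s X w ∧ c = cost m r w} := ⟨w₀, hw₀, rfl⟩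
  refine ⟨le_csInf ⟨_, hmem⟩ ?_, (csInf_le ⟨0, ?_⟩ hmem).trans hU⟩
  · rintro _ ⟨w, hw, rfl⟩
    exact hL w hw
  · rintro _ ⟨w, -, rfl⟩
    exact Finset.sum_nonneg fun τ hτ => mul_nonneg (Nat.cast_nonneg _)
      (hr0 τ (Finset.mem_Icc.mp hτ).1 (Finset.mem_Icc.mp hτ).2)

section LowerBound

variable (hm : 1 ≤ m) (hgpos : ∀ z, 1 ≤ z → z ≤ m → 0 < g z)
  (hr0 : ∀ z, 1 ≤ z → z ≤ m → 0 ≤ r z) (hs : ∀ J ∈ X, 0 ≤ s J ∧ s J ≤ g m)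
  {w : ℕ → ℕ} (hw : Feasible m g s X w) {t : ℕ} (ht1 : 1 ≤ t) (hk0t : k0f m g s X ≤ t)
  (htm : t ≤ m) (hwt : ∀ τ, 1 ≤ τ → τ ≤ m → w τ ≠ 0 → τ ≤ t)
include hm hgpos hr0 hs hw ht1 hk0t htm hwt

lemma sum_SH_le_cost_of_subset_T {k : ℕ} {F : Finset ℕ} (hF : ∀ z ∈ F, z ∈ T m g r k)
    (hk : pdef m g r k → t < p m g r k) :
    ∑ z ∈ F, SH m g r s X z * (r z / g z) ≤ cost m r w :=
  sum_SH_mul_rate_le_cost hm hgpos hr0 hs hw ht1 hk0t htm hwt F hF fun z hz hd =>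
    have h := pdef_and_p_le_p_of_mem_T (hF z hz) hd
    (hk h.1).trans_le h.2

/-- With `c` the highest ancestor of `z⋄` not above `t`, decency bounds the part of `C` in the
subtree of `c` by `r c`, and the rest is paid by the dual. -/
lemma cnCost_le_two_mul_cost (hrmono : ∀ i j, 1 ≤ i → i ≤ j → j ≤ m → r i ≤ r j)
    (hwt0 : w t ≠ 0) {zd : ℕ} (hzd1 : 1 ≤ zd) (hzdm : zd ≤ m) (hdec : decent m g r s X zd)
    (hzdt : zd ≤ t) : cnCost m g r s X zd ≤ 2 * cost m r w := by
  have hs0 : ∀ J ∈ X, 0 ≤ s J := fun J hJ => (hs J hJ).1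
  have hTIcc : ∀ {z}, z ∈ TIcc m g r zd ↔ z ∈ T m g r zd := mem_TIcc_iff hzd1 hzdm
  obtain ⟨c, hc, hct, hcp⟩ := exists_mem_P_le_lt_p (m := m) (g := g) (r := r) hzdt
  have hc1 := hzd1.trans (le_of_mem_P hc)
  have hrc : r c ≤ cost m r w :=
    (hrmono c t hc1 hct htm).trans (r_le_cost hr0 ht1 htm hwt0)
  rcases eq_or_ne c zd with rfl | hne
  · have hC := sum_cn_mul_r_le hgpos hs0 hzd1 hzdm hr0 (subset_refl (TIcc m g r c))
    rw [if_pos (mem_TIcc_self hzd1 hzdm)] at hC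
    have := sum_SH_le_cost_of_subset_T hm hgpos hr0 hs hw ht1 hk0t htm hwt
      (F := TIcc m g r c) (fun z hz => hTIcc.mp hz) hcp
    rw [cnCost]
    linarith
  set rest := (TIcc m g r zd).filter (fun z => z ∉ A m g r c)
  have hzd_rest : zd ∉ rest := fun h => (Finset.mem_filter.mp h).2 ⟨hzd1, hzdm, hc⟩
  have hrest := sum_cn_mul_r_le hgpos hs0 hzd1 hzdm hr0
    (Finset.filter_subset (fun z => z ∉ A m g r c) (TIcc m g r zd))
  rw [if_neg hzd_rest, zero_add] at hrest
  have hrest' : ∑ z ∈ rest, SH m g r s X z * (r z / g z) ≤ cost m r w := by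
    refine sum_SH_mul_rate_le_cost hm hgpos hr0 hs hw ht1 hk0t htm hwt rest
      (fun z hz => hTIcc.mp (Finset.mem_filter.mp hz).1) fun z hz => ?_
    obtain ⟨hzT, hzA⟩ := Finset.mem_filter.mp hz
    obtain ⟨h1, h2⟩ := one_le_and_le_m_of_mem_T hzd1 hzdm (hTIcc.mp hzT)
    exact lt_p_of_mem_T_of_notMem_P (hTIcc.mp hzT) hc (fun h => hzA ⟨h1, h2, h⟩) hcp
  have hsplit := Finset.sum_filter_add_sum_filter_not (TIcc m g r zd) (fun z => z ∈ A m g r c)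
    (fun z => cn m g r s X zd z * r z)
  have := hdec c hc hne
  rw [cnCost]
  linarith

/-- The child `z'` of `z⋄` on the chain of `k0` is not decent, and its violated constraint at
an ancestor `zt` of `z⋄` makes the dual pay `r zt - r z' ≥ (7/8) r z⋄`. -/
lemma cnCost_zdia_le_of_lt (hrmono : ∀ i j, 1 ≤ i → i ≤ j → j ≤ m → r i ≤ r j)
    (h8 : ∀ i j, 1 ≤ i → i < j → j ≤ m → 8 * r i ≤ r j) (hk1 : 1 ≤ k0f m g s X)
    (htzd : t < zdia m g r s X) : cnCost m g r s X (zdia m g r s X) ≤ 15 / 7 * cost m r w := by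
  have hs0 : ∀ J ∈ X, 0 ≤ s J := fun J hJ => (hs J hJ).1
  have hkm := hk0t.trans htm
  obtain ⟨hzdP, -⟩ := zdia_mem_P_and_decent (r := r) hkm
  set zd := zdia m g r s X
  have hzdm := le_m_of_mem_P hkm hzdP
  have hzd1 := hk1.trans (le_of_mem_P hzdP)
  obtain h0 | ⟨z', hz'P, hdz', hpz'⟩ := Relation.ReflTransGen.cases_tail hzdP
  · omega
  have hz'zd : z' < zd := hpz' ▸ lt_p hdz'
  have hz'1 := hk1.trans (le_of_mem_P hz'P)
  have hz'm : z' ≤ m := by omega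
  have hndec : ¬ decent m g r s X z' := fun hd => absurd (zdia_le hz'P hd) (not_le.mpr hz'zd)
  simp only [decent, not_forall, not_le, exists_prop] at hndec
  obtain ⟨zt, hztP, hztne, hviol⟩ := hndec
  have hztzd : zt ∈ P m g r zd := hpz' ▸ (mem_P_p_of_mem_P_of_ne hztP hztne).2
  have hztm := le_m_of_mem_P hzdm hztzd
  set region := (TIcc m g r z').filter (fun z => z ∈ A m g r zt)
  have hregion := sum_cn_mul_r_le hgpos hs0 hz'1 hz'm hr0
    (Finset.filter_subset (fun z => z ∈ A m g r zt) (TIcc m g r z'))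
  rw [if_pos (Finset.mem_filter.mpr ⟨mem_TIcc_self hz'1 hz'm, hz'1, hz'm, hztP⟩)] at hregion
  have hdual_region := sum_SH_le_cost_of_subset_T hm hgpos hr0 hs hw ht1 hk0t htm hwt
    (F := region) (fun z hz => (mem_TIcc_iff hz'1 hz'm).mp (Finset.mem_filter.mp hz).1)
    (fun _ => hpz' ▸ htzd)
  have hC := sum_cn_mul_r_le hgpos hs0 hzd1 hzdm hr0 (subset_refl (TIcc m g r zd))
  rw [if_pos (mem_TIcc_self hzd1 hzdm)] at hC
  have hdual := sum_SH_le_cost_of_subset_T hm hgpos hr0 hs hw ht1 hk0t htm hwt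
    (F := TIcc m g r zd) (fun z hz => (mem_TIcc_iff hzd1 hzdm).mp hz)
    (fun hd => htzd.trans (lt_p hd))
  have := hrmono zd zt hzd1 (le_of_mem_P hztzd) hztm
  have := h8 z' zd hz'1 hz'zd hzdm
  rw [cnCost]
  linarith

end LowerBound

end Bounds

/-- Setting `C := ∑_{z ∈ T(z⋄)} cn_{z⋄}(z)·r z`, the optimal
one-shot scheduling cost satisfies `(7/15)·C ≤ OPT1(𝒥) ≤ (8/7)·C`. -/
theorem statement_10 {ι : Type*} (m : ℕ) (g r : ℕ → ℝ) (s : ι → ℝ) (𝒥 : Finset ι)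
    (hm : 1 ≤ m)
    (hg1 : 0 < g 1) (hr1 : 0 < r 1)
    (hg : ∀ i j, 1 ≤ i → i < j → j ≤ m → g i < g j)
    (hr : ∀ i j, 1 ≤ i → i < j → j ≤ m → r i < r j)
    (hr8 : ∀ z, 1 ≤ z → z ≤ m → ∃ n : ℤ, r z = (8 : ℝ) ^ n)
    (hJ : 𝒥.Nonempty)
    (hs : ∀ J ∈ 𝒥, 0 < s J ∧ s J ≤ g m) :
    7 / 15 * (∑ z ∈ TIcc m g r (zdia m g r s 𝒥),
        cn m g r s 𝒥 (zdia m g r s 𝒥) z * r z)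
      ≤ OPT1 m g r s 𝒥 ∧
    OPT1 m g r s 𝒥
      ≤ 8 / 7 * (∑ z ∈ TIcc m g r (zdia m g r s 𝒥),
          cn m g r s 𝒥 (zdia m g r s 𝒥) z * r z) := by
  have hgpos := pos_of_pos_of_lt hg1 hg
  have hr0 z h1 h2 := (pos_of_pos_of_lt hr1 hr z h1 h2).le
  have hrmono i j (hi : 1 ≤ i) (hij : i ≤ j) (hj : j ≤ m) : r i ≤ r j :=
    hij.eq_or_lt.elim (fun h => h ▸ le_rfl) fun h => (hr i j hi h hj).le
  have h8 i j (hi : 1 ≤ i) (hij : i < j) (hj : j ≤ m) : 8 * r i ≤ r j :=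
    mul_le_of_zpow_lt_zpow (by norm_num) (hr8 i hi (by omega)) (hr8 j (by omega) hj)
      (hr i j hi hij hj)
  have hs' J hJ : 0 ≤ s J ∧ s J ≤ g m := ⟨(hs J hJ).1.le, (hs J hJ).2⟩
  obtain ⟨hk1, hk0zd, hzdm, hdec, hSH⟩ := zdia_spec (r := r) hm hs hJ
  have hzd1 := hk1.trans hk0zd
  have hC := r_le_cnCost hgpos hr0 (fun J hJ => (hs' J hJ).1) hzd1 hzdm hSH
  change 7 / 15 * cnCost m g r s 𝒥 _ ≤ _ ∧ _ ≤ 8 / 7 * cnCost m g r s 𝒥 _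
  refine le_OPT1_and_OPT1_le hr0 (feasible_ceilConfig (r := r) hm hgpos hs' hzd1 hzdm hk0zd) ?_ ?_
  · linarith [cost_ceilConfig_le (s := s) (X := 𝒥) hgpos hr0 h8 (fun J hJ => (hs' J hJ).1)
      hzd1 hzdm]
  intro w hw
  obtain ⟨t, hk0t, htm, hwt0, hwt⟩ := exists_max_used hm hs hJ hw
  rcases le_or_gt (zdia m g r s 𝒥) t with hzdt | htzd
  · linarith [cnCost_le_two_mul_cost hm hgpos hr0 hs' hw (hk1.trans hk0t) hk0t htm hwt
      hrmono hwt0 hzd1 hzdm hdec hzdt, hr0 _ hzd1 hzdm]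
  · linarith [cnCost_zdia_le_of_lt hm hgpos hr0 hs' hw (hk1.trans hk0t) hk0t htm hwt
      hrmono h8 hk1 htzd]

end BSHM
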